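/- For β > 1 and fixed j, the normalized Beta-Shapley coefficient (γ_n)^{-1} · w_{α,β}^{(n)}(j)·C(n-1,j-1)·(1/j) converges to 0 as n → ∞, where γ_n = ∑_{i=1}^{n} w_{α,β}^{(n)}(i)·C(n-1,i-1)·(1/i) and w_{α,β}^{(n)}(j) = n·Beta(j+β-1, n-j+α)/Beta(α,β). -/

import Mathlib

/-!
Write `T n i = w(i) C(n-1, i-1) / i = C(n, i) B(i + β - 1, n - i + α) / B(α, β)`.
The beta-binomial identity `∑_{i ≤ n} C(n, i) B(x + i, y + n - i) = B(x, y)`, proved by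
Pascal's rule and `B(x, y) = B(x + 1, y) + B(x, y + 1)`, gives
`B(α, β) γ_n = B(β - 1, α) - B(β - 1, α + n) ≥ B(β - 1, α) - B(β - 1, α + 1) = B(α, β)`,
so `γ_n ≥ 1`. Log-convexity of `Γ` gives `B(a, m) ≤ Γ(a) (m - 1)^(-a)`, whence
`T n j = O(n^(1 - β)) → 0`.
-/

open Finset Filter

noncomputable def Beta (x y : ℝ) : ℝ := Real.Gamma x * Real.Gamma y / Real.Gamma (x + y)

/-- The Beta-Shapley weight `w_{α,β}^{(n)}(j)`. -/
noncomputable def betaWeight (α β : ℝ) (n j : ℕ) : ℝ :=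
  (n : ℝ) * Beta ((j : ℝ) + β - 1) ((n : ℝ) - (j : ℝ) + α) / Beta α β

open Topology

/-- Log-convexity of `Γ`: the slope of `log Γ` on `[m, m + a]` is at least its slope on
`[m - 1, m]`, which is `log (m - 1)`. -/
lemma Real.rpow_mul_Gamma_le_Gamma_add {a m : ℝ} (ha : 0 < a) (hm : 1 < m) :
    (m - 1) ^ a * Real.Gamma m ≤ Real.Gamma (m + a) := by
  have hm1 : 0 < m - 1 := by linarith
  have hslope := Real.convexOn_log_Gamma.slope_mono_adjacent (x := m - 1) (y := m) (z := m + a)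
    (Set.mem_Ioi.2 hm1) (Set.mem_Ioi.2 (by linarith)) (by linarith) (by linarith)
  have hrec : Real.Gamma m = (m - 1) * Real.Gamma (m - 1) := by
    simpa using Real.Gamma_add_one hm1.ne'
  have hG := Real.Gamma_pos_of_pos hm1
  simp only [Function.comp_apply, sub_sub_cancel, div_one, add_sub_cancel_left] at hslope
  rw [hrec, Real.log_mul hm1.ne' hG.ne', add_sub_cancel_right, le_div_iff₀ ha] at hslope
  rw [← Real.log_le_log_iff (by positivity) (Real.Gamma_pos_of_pos (by linarith)), hrec,
    Real.log_mul (by positivity) (by positivity), Real.log_mul hm1.ne' hG.ne', Real.log_rpow hm1]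
  linarith

lemma Beta_pos {x y : ℝ} (hx : 0 < x) (hy : 0 < y) : 0 < Beta x y := by
  have := Real.Gamma_pos_of_pos hx
  have := Real.Gamma_pos_of_pos hy
  have := Real.Gamma_pos_of_pos (add_pos hx hy)
  unfold Beta
  positivity

lemma Beta_comm (x y : ℝ) : Beta x y = Beta y x := by
  rw [Beta, Beta, add_comm, mul_comm]

lemma Beta_add_one_left_add_Beta_add_one_right {x y : ℝ} (hx : 0 < x) (hy : 0 < y) :
    Beta (x + 1) y + Beta x (y + 1) = Beta x y := by
  have hxy : 0 < x + y := add_pos hx hy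
  have := (Real.Gamma_pos_of_pos hxy).ne'
  rw [Beta, Beta, Beta, show x + 1 + y = x + y + 1 by ring, show x + (y + 1) = x + y + 1 by ring,
    Real.Gamma_add_one hx.ne', Real.Gamma_add_one hy.ne', Real.Gamma_add_one hxy.ne']
  field_simp

lemma Beta_add_nat_right_le {x y : ℝ} (hx : 0 < x) (hy : 0 < y) {n : ℕ} (hn : 1 ≤ n) :
    Beta x (y + n) ≤ Beta x (y + 1) := by
  have hanti : Antitone fun k : ℕ => Beta x (y + k) := antitone_nat_of_succ_le fun k => by
    have hk : 0 < y + k := by positivity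
    rw [Nat.cast_succ, ← add_assoc, ← Beta_add_one_left_add_Beta_add_one_right hx hk]
    linarith [Beta_pos (by linarith : 0 < x + 1) hk]
  simpa using hanti hn

lemma Beta_le_Gamma_mul_rpow {a m : ℝ} (ha : 0 < a) (hm : 1 < m) :
    Beta a m ≤ Real.Gamma a * (m - 1) ^ (-a) := by
  have hGam := Real.Gamma_pos_of_pos (by linarith : 0 < m + a)
  have hpow : 0 < (m - 1) ^ a := Real.rpow_pos_of_pos (by linarith) a
  rw [Beta, Real.rpow_neg (by linarith), add_comm, mul_div_assoc]
  refine mul_le_mul_of_nonneg_left ?_ (Real.Gamma_pos_of_pos ha).le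
  rw [div_le_iff₀ hGam, inv_mul_eq_div, le_div_iff₀ hpow, mul_comm]
  exact Real.rpow_mul_Gamma_le_Gamma_add ha hm

theorem sum_range_choose_mul_Beta {x y : ℝ} (hx : 0 < x) (hy : 0 < y) (n : ℕ) :
    ∑ i ∈ range (n + 1), (n.choose i : ℝ) * Beta (x + i) (y + (n - i : ℕ)) = Beta x y := by
  induction n with
  | zero => simp
  | succ n ih =>
    rw [sum_choose_succ_mul (fun i k => Beta (x + i) (y + k)), ← sum_add_distrib, ← ih]
    refine sum_congr rfl fun i hi => ?_
    have hin : n + 1 - i = n - i + 1 := by have := mem_range.1 hi; omega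
    rw [← mul_add, hin, Nat.cast_succ, Nat.cast_succ, ← add_assoc, ← add_assoc, add_comm,
      Beta_add_one_left_add_Beta_add_one_right (by positivity) (by positivity)]

noncomputable def betaShapleyCoeff (α β : ℝ) (n i : ℕ) : ℝ :=
  betaWeight α β n i * ((n - 1).choose (i - 1) : ℝ) * (1 / (i : ℝ))

lemma betaShapleyCoeff_eq (α β : ℝ) {n i : ℕ} (hi : 1 ≤ i) :
    betaShapleyCoeff α β n i = n.choose i * Beta (i + β - 1) (n - i + α) / Beta α β := by
  obtain ⟨k, rfl⟩ := Nat.exists_eq_add_of_le' hi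
  rcases n with _ | m
  · simp [betaShapleyCoeff, betaWeight]
  · have hchoose : ((m + 1 : ℕ) : ℝ) * (m.choose k : ℝ) * (1 / ((k + 1 : ℕ) : ℝ)) =
        (m + 1).choose (k + 1) := by
      field_simp
      exact_mod_cast (Nat.add_one_mul_choose_eq m k).trans (mul_comm _ _)
    rw [betaShapleyCoeff, betaWeight, Nat.add_sub_cancel, Nat.add_sub_cancel, ← hchoose]
    ring

lemma Beta_mul_sum_betaShapleyCoeff {α β : ℝ} (hα : 0 < α) (hβ : 1 < β) (n : ℕ) :
    Beta α β * ∑ i ∈ Icc 1 n, betaShapleyCoeff α β n i =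
      Beta (β - 1) α - Beta (β - 1) (α + n) := by
  have hB := (Beta_pos hα (by linarith : 0 < β)).ne'
  have hrange : range (n + 1) = insert 0 (Icc 1 n) := by
    ext i; simp only [mem_range, mem_insert, mem_Icc]; omega
  rw [← sum_range_choose_mul_Beta (by linarith) hα n, hrange, sum_insert (by simp), mul_sum]
  simp only [Nat.choose_zero_right, Nat.cast_zero, add_zero, Nat.sub_zero, Nat.cast_one, one_mul,
    add_sub_cancel_left]
  refine sum_congr rfl fun i hi => ?_
  obtain ⟨hi1, hin⟩ := mem_Icc.1 hi
  rw [betaShapleyCoeff_eq α β hi1, Nat.cast_sub hin, mul_div_cancel₀ _ hB]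
  ring_nf

lemma one_le_sum_betaShapleyCoeff {α β : ℝ} (hα : 0 < α) (hβ : 1 < β) {n : ℕ} (hn : 1 ≤ n) :
    1 ≤ ∑ i ∈ Icc 1 n, betaShapleyCoeff α β n i := by
  have hB := Beta_pos hα (by linarith : 0 < β)
  have hβ1 : 0 < β - 1 := by linarith
  have hsum := Beta_mul_sum_betaShapleyCoeff hα hβ n
  have hmono := Beta_add_nat_right_le hβ1 hα hn
  have hrec := Beta_add_one_left_add_Beta_add_one_right hβ1 hα
  rw [sub_add_cancel, Beta_comm] at hrec
  refine le_of_mul_le_mul_left ?_ hB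
  linarith

lemma tendsto_choose_mul_Beta_atTop {x : ℝ} (hx : 0 < x) (y : ℝ) (j : ℕ) :
    Tendsto (fun n : ℕ => (n.choose j : ℝ) * Beta (j + x) (n - j + y)) atTop (𝓝 0) := by
  set m : ℕ → ℝ := fun n => n + (y - j - 1)
  have hjx : 0 < j + x := by positivity
  have hm : Tendsto m atTop atTop := tendsto_atTop_add_const_right _ _ tendsto_natCast_atTop_atTop
  have hbound : Tendsto (fun n => Real.Gamma (j + x) * ((n / m n) ^ j * m n ^ (-x)))
      atTop (𝓝 0) := by
    simpa using (((tendsto_natCast_div_add_atTop (y - j - 1)).pow j).mul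
      ((tendsto_rpow_neg_atTop hx).comp hm)).const_mul (Real.Gamma (j + x))
  have hBarg (n : ℕ) : (n : ℝ) - j + y = m n + 1 := by ring
  refine squeeze_zero' ?_ ?_ hbound <;> filter_upwards [hm.eventually_gt_atTop 0] with n hmn
  · rw [hBarg]
    exact mul_nonneg (Nat.cast_nonneg _) (Beta_pos hjx (by linarith)).le
  · calc (n.choose j : ℝ) * Beta (j + x) (n - j + y)
        ≤ (n : ℝ) ^ j * (Real.Gamma (j + x) * m n ^ (-(j + x))) := by
          rw [hBarg]
          gcongr
          · exact (Beta_pos hjx (by linarith)).le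
          · exact_mod_cast Nat.choose_le_pow n j
          · simpa using Beta_le_Gamma_mul_rpow hjx (by linarith : 1 < m n + 1)
      _ = Real.Gamma (j + x) * ((n / m n) ^ j * m n ^ (-x)) := by
          rw [neg_add, Real.rpow_add hmn, Real.rpow_neg hmn.le, Real.rpow_natCast, div_pow]
          field_simp

lemma tendsto_betaShapleyCoeff_atTop (α : ℝ) {β : ℝ} (hβ : 1 < β) {j : ℕ} (hj : 1 ≤ j) :
    Tendsto (fun n => betaShapleyCoeff α β n j) atTop (𝓝 0) := by
  have h := (tendsto_choose_mul_Beta_atTop (by linarith : 0 < β - 1) α j).div_const (Beta α β)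
  rw [zero_div] at h
  refine h.congr fun n => ?_
  rw [betaShapleyCoeff_eq α β hj, add_sub_assoc]

theorem beta_shapley_normalized_coefficient_vanishes
    (α β : ℝ) (hα : 0 < α) (hβ : 1 < β) (j : ℕ) (hj : 1 ≤ j) :
    Tendsto
      (fun n : ℕ =>
        (∑ i ∈ Finset.Icc 1 n,
            betaWeight α β n i * ((n - 1).choose (i - 1) : ℝ) * (1 / (i : ℝ)))⁻¹ *
          (betaWeight α β n j * ((n - 1).choose (j - 1) : ℝ) * (1 / (j : ℝ))))
      atTop (nhds 0) := by
  have hinv_le_one : ∀ᶠ n in atTop, ‖(∑ i ∈ Icc 1 n, betaShapleyCoeff α β n i)⁻¹‖ ≤ 1 := by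
    filter_upwards [eventually_ge_atTop 1] with n hn
    have hγ := one_le_sum_betaShapleyCoeff hα hβ hn
    rw [norm_inv, Real.norm_of_nonneg (by linarith)]
    exact inv_le_one_of_one_le₀ hγ
  exact isBoundedUnder_le_mul_tendsto_zero (isBoundedUnder_of_eventually_le hinv_le_one)
    (tendsto_betaShapleyCoeff_atTop α hβ hj)
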